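/- For every m ≥ 1, both envelope words E_{1,m} and E_{2,m} are palindromes. -/

import Mathlib

/-- The alphabet: letters a, b (for the period-doubling sequence) and c (used by Θ₂). -/
inductive Letter : Type
  | a | b | c
deriving DecidableEq, Repr

open Letter

/-- The period-doubling substitution σ : a ↦ ab, b ↦ aa, extended to words
(the extra letter c is left untouched; it is never produced). -/
def sigmaw : List Letter → List Letter :=
  fun w => w.flatMap fun x => match x with
    | .a => [.a, .b]
    | .b => [.a, .a]
    | .c => [.c]

/-- A_m = σ^m(a). -/
def A (m : ℕ) : List Letter := sigmaw^[m] [.a]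

/-- B_m = σ^m(b). -/
def B (m : ℕ) : List Letter := sigmaw^[m] [.b]

/-- δ_m, the last letter of A_m. -/
def delta (m : ℕ) : Letter := (A m).getLastD .a

/-- The period-doubling sequence D, as a function giving its (n+1)-st letter
(0-indexed); it is the fixed point of σ beginning with a, and A_{n+1} is a
prefix of it of length 2^{n+1} > n. -/
def D (n : ℕ) : Letter := (A (n + 1)).getD n .a

/-- The finite segment D[i .. i+len−1] of the period-doubling sequence,
with 1-based starting position i. -/
def Dseg (i len : ℕ) : List Letter := (List.range len).map fun k => D (i - 1 + k)

/-- u occurs in the finite word w at (1-based) position i. -/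
def OccursAt {α : Type*} (u w : List α) (i : ℕ) : Prop :=
  1 ≤ i ∧ i - 1 + u.length ≤ w.length ∧ (w.drop (i - 1)).take u.length = u

/-- u is a factor of the finite word w. -/
def IsFactor {α : Type*} (u w : List α) : Prop := ∃ i, OccursAt u w i

/-- u occurs in the period-doubling sequence D at (1-based) position i. -/
def DOccursAt (u : List Letter) (i : ℕ) : Prop := 1 ≤ i ∧ Dseg i u.length = u

/-- u is a factor of the period-doubling sequence D. -/
def FactorD (u : List Letter) : Prop := ∃ i, DOccursAt u i

/-- L(u,p): the starting position of the p-th occurrence (p ≥ 1) of u in D. -/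
noncomputable def L (u : List Letter) (p : ℕ) : ℕ := Nat.nth (DOccursAt u) (p - 1)

/-- r_p(u): the p-th return word of u (p ≥ 1), i.e. D[L(u,p) .. L(u,p+1)−1];
r_0(u) is the prefix of D preceding the first occurrence of u. -/
noncomputable def r (u : List Letter) (p : ℕ) : List Letter :=
  if p = 0 then Dseg 1 (L u 1 - 1) else Dseg (L u p) (L u (p + 1) - L u p)

/-- The morphism τ₁ : a ↦ a, b ↦ bb, extended to words. -/
def tau1 : List Letter → List Letter :=
  fun w => w.flatMap fun x => match x with
    | .a => [.a]
    | .b => [.b, .b]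
    | .c => [.c]

/-- The morphism τ₂ : a ↦ ab, b ↦ acac, extended to words. -/
def tau2 : List Letter → List Letter :=
  fun w => w.flatMap fun x => match x with
    | .a => [.a, .b]
    | .b => [.a, .c, .a, .c]
    | .c => [.c]

/-- Θ₁[p], the p-th letter (p ≥ 1) of Θ₁ = τ₁(D): since |τ₁(w)| ≥ |w|, the p-th
letter of Θ₁ is the p-th letter of the image of the length-p prefix of D. -/
def Theta1 (p : ℕ) : Letter := (tau1 (Dseg 1 p)).getD (p - 1) .a

/-- Θ₂[p], the p-th letter (p ≥ 1) of Θ₂ = τ₂(D). -/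
def Theta2 (p : ℕ) : Letter := (tau2 (Dseg 1 p)).getD (p - 1) .a

/-- The envelope word E_{1,m} = A_m with its last letter δ_m deleted. -/
def E1 (m : ℕ) : List Letter := (A m).dropLast

/-- The envelope word E_{2,m} = B_m B_{m−1} with its last letter δ_m deleted. -/
def E2 (m : ℕ) : List Letter := (B m ++ B (m - 1)).dropLast

/-- Enumeration of the envelope words in the order
E_{1,1} ⊏ E_{2,1} ⊏ E_{1,2} ⊏ E_{2,2} ⊏ …. -/
def Eword (k : ℕ) : List Letter := if k % 2 = 0 then E1 (k / 2 + 1) else E2 (k / 2 + 1)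

/-- Env(u): the ⊏-least envelope word having u as a factor. -/
noncomputable def Env (u : List Letter) : List Letter :=
  Eword (sInf {k | IsFactor u (Eword k)})

/-- The letterwise complement exchanging a and b. -/
def comp : Letter → Letter
  | .a => .b
  | .b => .a
  | .c => .c

/-!
Since `σ(a)` and `σ(b)` differ only in their last letter, so do `A_m` and `B_m` for every `m`.
Hence, writing `A_m = E_{1,m} δ_m`, the recursions `A_{m+1} = A_m B_m` and `B_{m+1} = A_m A_m`
give `E_{1,m+1} = E_{1,m} δ_m E_{1,m}` and `E_{2,m+1} = E_{1,m} δ_m E_{1,m} δ_m E_{1,m}`,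
and both are palindromes once `E_{1,m}` is.
-/

theorem sigmaw_append (u v : List Letter) : sigmaw (u ++ v) = sigmaw u ++ sigmaw v :=
  List.flatMap_append

theorem sigmaw_iterate_append (m : ℕ) (u v : List Letter) :
    sigmaw^[m] (u ++ v) = sigmaw^[m] u ++ sigmaw^[m] v := by
  induction m generalizing u v with
  | zero => rfl
  | succ n ih => simp only [Function.iterate_succ_apply, sigmaw_append, ih]

theorem A_succ (m : ℕ) : A (m + 1) = A m ++ B m :=
  sigmaw_iterate_append m [a] [b]

theorem B_succ (m : ℕ) : B (m + 1) = A m ++ A m :=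
  sigmaw_iterate_append m [a] [a]

theorem A_ne_nil (m : ℕ) : A m ≠ [] := by
  induction m with
  | zero => simp [A]
  | succ n ih => simp [A_succ, ih]

theorem B_ne_nil (m : ℕ) : B m ≠ [] := by
  cases m with
  | zero => simp [B]
  | succ n => simp [B_succ, A_ne_nil n]

theorem dropLast_B (m : ℕ) : (B m).dropLast = (A m).dropLast := by
  induction m with
  | zero => rfl
  | succ n ih =>
    rw [A_succ, B_succ, List.dropLast_append_of_ne_nil (A_ne_nil n),
      List.dropLast_append_of_ne_nil (B_ne_nil n), ih]

theorem E1_append_delta (m : ℕ) : E1 m ++ [delta m] = A m := by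
  rw [E1, delta, List.getLastD_eq_getLast?, List.getLast?_eq_some_getLast (A_ne_nil m)]
  exact List.dropLast_append_getLast (A_ne_nil m)

theorem E1_succ (m : ℕ) : E1 (m + 1) = A m ++ E1 m := by
  rw [E1, A_succ, List.dropLast_append_of_ne_nil (B_ne_nil m), dropLast_B, E1]

theorem E2_succ (m : ℕ) : E2 (m + 1) = A m ++ E1 (m + 1) := by
  rw [E2, Nat.add_sub_cancel, B_succ, List.dropLast_append_of_ne_nil (B_ne_nil m), dropLast_B,
    E1_succ, E1, List.append_assoc]

theorem E1_reverse (m : ℕ) : (E1 m).reverse = E1 m := by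
  induction m with
  | zero => rfl
  | succ n ih => simp [E1_succ, ← E1_append_delta n, ih]

theorem E2_reverse (m : ℕ) : (E2 m).reverse = E2 m := by
  cases m with
  | zero => rfl
  | succ n => simp [E2_succ, E1_succ, ← E1_append_delta n, E1_reverse]

theorem envelope_words_palindromes_general (m : ℕ) :
    (E1 m).reverse = E1 m ∧ (E2 m).reverse = E2 m :=
  ⟨E1_reverse m, E2_reverse m⟩

/-- For every m ≥ 1, both envelope words E_{1,m} and E_{2,m} are
palindromes. -/
theorem envelope_words_palindromes (m : ℕ) (hm : 1 ≤ m) :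
    (E1 m).reverse = E1 m ∧ (E2 m).reverse = E2 m :=
  envelope_words_palindromes_general m
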